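/- Let C be a local identifying code in F_2^n and let c be a codeword with I(c) = {c}. Then the share of c satisfies s(c) ≤ 1 + n/2. -/

import Mathlib

open SimpleGraph

/-- The closed neighbourhood of a vertex. -/
def cnbr {V : Type*} (G : SimpleGraph V) (u : V) : Set V := insert u (G.neighborSet u)

/-- The `I`-set of a vertex with respect to a code `C`. -/
def iset {V : Type*} (G : SimpleGraph V) (C : Set V) (u : V) : Set V := cnbr G u ∩ C

/-- `C` is a dominating set (covering code). -/
def IsDominating {V : Type*} (G : SimpleGraph V) (C : Set V) : Prop :=
  ∀ u, (iset G C u).Nonempty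

/-- `C` is a local identifying code. -/
def IsLocalID {V : Type*} (G : SimpleGraph V) (C : Set V) : Prop :=
  IsDominating G C ∧ ∀ u v, G.Adj u v → iset G C u ≠ iset G C v

/-- `C` is a local locating-dominating code. -/
def IsLocalLD {V : Type*} (G : SimpleGraph V) (C : Set V) : Prop :=
  IsDominating G C ∧ ∀ u v, G.Adj u v → u ∉ C → v ∉ C → iset G C u ≠ iset G C v

/-- `C` is an identifying code. -/
def IsID {V : Type*} (G : SimpleGraph V) (C : Set V) : Prop :=
  IsDominating G C ∧ ∀ u v : V, u ≠ v → iset G C u ≠ iset G C v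

/-- `C` is a locating-dominating code. -/
def IsLD {V : Type*} (G : SimpleGraph V) (C : Set V) : Prop :=
  IsDominating G C ∧ ∀ u v : V, u ≠ v → u ∉ C → v ∉ C → iset G C u ≠ iset G C v

/-- The share of a codeword `c`. -/
noncomputable def share {V : Type*} (G : SimpleGraph V) (C : Set V) (c : V) : ℝ :=
  ∑ᶠ u ∈ cnbr G c, (1 : ℝ) / (iset G C u).ncard

/-- The binary `n`-dimensional hypercube. -/
def cube (n : ℕ) : SimpleGraph (Fin n → ZMod 2) where
  Adj x y := hammingDist x y = 1
  symm := ⟨fun x y (h : hammingDist x y = 1) => show hammingDist y x = 1 by rwa [hammingDist_comm]⟩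
  loopless := ⟨fun x (h : hammingDist x x = 1) => by rw [hammingDist_self] at h; exact absurd h (by norm_num)⟩

/-!
Since `I(c) = {c}`, every neighbour `u` of `c` has `c ∈ I(u)` and `I(u) ≠ I(c)`, so `|I(u)| ≥ 2`.
Hence `c` contributes `1` to its own share and each of its at most `n` neighbours at most `1/2`.
-/

theorem ZMod.two_eq_add_one_of_ne {a b : ZMod 2} (h : a ≠ b) : b = a + 1 := by
  revert a b; decide

theorem eq_update_of_hammingDist_eq_one {ι : Type*} [Fintype ι] [DecidableEq ι]
    {x y : ι → ZMod 2} (h : hammingDist x y = 1) : ∃ i, y = Function.update x i (x i + 1) := by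
  obtain ⟨i, hi⟩ := Finset.card_eq_one.mp h
  have hdiff : ∀ j, x j ≠ y j ↔ j = i := fun j => by
    simpa using Finset.ext_iff.mp hi j
  refine ⟨i, funext fun j => ?_⟩
  by_cases hj : j = i
  · subst hj
    simpa using ZMod.two_eq_add_one_of_ne ((hdiff j).mpr rfl)
  · rw [Function.update_of_ne hj]
    exact (not_not.mp (mt (hdiff j).mp hj)).symm

theorem degree_cube_le (n : ℕ) (x : Fin n → ZMod 2) [Fintype ((cube n).neighborSet x)] :
    (cube n).degree x ≤ n := by
  classical
  calc (cube n).degree x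
      ≤ (Finset.univ.image fun i => Function.update x i (x i + 1)).card := by
        rw [← card_neighborFinset_eq_degree]
        refine Finset.card_le_card fun y hy => ?_
        obtain ⟨i, rfl⟩ := eq_update_of_hammingDist_eq_one ((mem_neighborFinset _ _ _).mp hy)
        exact Finset.mem_image_of_mem _ (Finset.mem_univ i)
    _ ≤ n := Finset.card_image_le.trans (by simp)

section
variable {V : Type*} {G : SimpleGraph V} {C : Set V}

theorem mem_of_iset_eq_singleton {c : V} (hI : iset G C c = {c}) : c ∈ C :=
  (hI.symm ▸ rfl : c ∈ iset G C c).2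

/-- If `I(u)` is infinite its `ncard` is `0`, and the bound holds because `1 / 0 = 0`. -/
theorem one_div_ncard_iset_le_half (hloc : ∀ u v, G.Adj u v → iset G C u ≠ iset G C v)
    {c u : V} (hI : iset G C c = {c}) (hcu : G.Adj c u) :
    (1 : ℝ) / (iset G C u).ncard ≤ 1 / 2 := by
  have hc : c ∈ iset G C u := ⟨Set.mem_insert_of_mem _ hcu.symm, mem_of_iset_eq_singleton hI⟩
  have hne : (iset G C u).ncard ≠ 1 := by
    rintro h
    obtain ⟨a, ha⟩ := Set.ncard_eq_one.mp h
    rw [ha, Set.mem_singleton_iff] at hc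
    exact hloc c u hcu (by rw [hI, ha, hc])
  rcases Nat.lt_or_ge (iset G C u).ncard 2 with hlt | hge
  · rw [show (iset G C u).ncard = 0 by omega]
    norm_num
  · exact one_div_le_one_div_of_le two_pos (by exact_mod_cast hge)

theorem share_le_one_add_half_degree (hloc : ∀ u v, G.Adj u v → iset G C u ≠ iset G C v)
    {c : V} [Fintype (G.neighborSet c)] (hI : iset G C c = {c}) :
    share G C c ≤ 1 + G.degree c / 2 := by
  classical
  have hcnbr : cnbr G c = ↑(insert c (G.neighborFinset c)) := by
    simp [cnbr]
  rw [share, hcnbr, finsum_mem_coe_finset, Finset.sum_insert (by simp), hI, Set.ncard_singleton,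
    Nat.cast_one, div_one]
  calc 1 + ∑ u ∈ G.neighborFinset c, 1 / ((iset G C u).ncard : ℝ)
      ≤ 1 + ∑ _u ∈ G.neighborFinset c, (1 : ℝ) / 2 :=
        add_le_add_right (Finset.sum_le_sum fun u hu =>
          one_div_ncard_iset_le_half hloc hI ((mem_neighborFinset _ _ _).mp hu)) 1
    _ = 1 + G.degree c / 2 := by
        rw [Finset.sum_const, card_neighborFinset_eq_degree, nsmul_eq_mul]
        ring

end

theorem stmt8_general (n : ℕ) (C : Set (Fin n → ZMod 2)) (hC : IsLocalID (cube n) C)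
    (c : Fin n → ZMod 2) (hI : iset (cube n) C c = {c}) :
    share (cube n) C c ≤ 1 + (n : ℝ) / 2 := by
  classical
  calc share (cube n) C c ≤ 1 + ((cube n).degree c : ℝ) / 2 :=
        share_le_one_add_half_degree hC.2 hI
    _ ≤ 1 + (n : ℝ) / 2 := by
        gcongr
        exact_mod_cast degree_cube_le n c

/-- If `C` is a local identifying code in `F_2^n` and `c` is a codeword with
`I(c) = {c}`, then `s(c) ≤ 1 + n/2`. -/
theorem stmt8 (n : ℕ) (C : Set (Fin n → ZMod 2)) (hC : IsLocalID (cube n) C)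
    (c : Fin n → ZMod 2) (hc : c ∈ C) (hI : iset (cube n) C c = {c}) :
    share (cube n) C c ≤ 1 + (n : ℝ) / 2 :=
  stmt8_general n C hC c hI
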